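/- arXiv:2003.04167 — 2 statements merged into one kernel-verified Lean document; each statement's English description precedes it below -/
import Mathlib

section
/- Fix $p \geq 1$, $m \geq 1$, and $f_1, \dots, f_m \in L^1_{loc}(\mathbb{R}^n)$ with each $Mf_i$ finite a.e. and not identically zero. Let $v = \prod_{i=1}^m (Mf_i)^{-1}$. Then $v^p \in RH_\infty$ and $1 \leq [v^p]_{RH_\infty} \leq c_{m,n,p}$, where $c_{m,n,p} = \inf_{0<\delta<1} (c_n/(1-\delta))^{mp/\delta}$ and $c_n$ is the dimensional constant in the $A_1$ bound for $(Mf)^\delta$. -/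
/-!
By Coifman–Rochberg, each `uᵢ = (Mfᵢ)^δ` is an `A₁` weight with constant at most
`D = c_n / (1 - δ)`, and `v^p = (∏ uᵢ)^(-p/δ)`. On a cube `Q` the essential supremum of `v^p`
is at most `∏ (ess inf_Q uᵢ)^(-p/δ)`, while the generalized Hölder inequality followed by
Jensen's inequality for `t ↦ t^(-s)` bounds the average of `v^p` over `Q` from below by
`∏ (avg_Q uᵢ)^(-p/δ)`. The `A₁` condition `avg_Q uᵢ ≤ D · ess inf_Q uᵢ` then gives
`[v^p]_{RH_∞} ≤ D^(mp/δ)`.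

The lower bound `1` holds for any weight whose integral over some cube is positive and finite,
because `w(Q) ≤ |Q| · ess sup_Q w`. For `v^p` finiteness comes from `Mfᵢ` being bounded below
on every cube `Q` by the average of `fᵢ` over a cube containing both `Q` and a cube where `fᵢ`
has positive integral.
-/

open MeasureTheory Set ENNReal NNReal

noncomputable section

abbrev Rn (n : ℕ) := EuclideanSpace ℝ (Fin n)

variable {n : ℕ}

/-- The closed cube with lower-left corner `x` and side length `r`. -/
def cubeSet (x : Rn n) (r : ℝ) : Set (Rn n) := {y : Rn n | ∀ i, x i ≤ y i ∧ y i ≤ x i + r}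

def IsCube (Q : Set (Rn n)) : Prop := ∃ (x : Rn n) (r : ℝ), 0 < r ∧ Q = cubeSet x r

/-- `w(E) = ∫_E w`. -/
def wInt (w : Rn n → ℝ≥0∞) (E : Set (Rn n)) : ℝ≥0∞ := ∫⁻ x in E, w x

/-- A weight: a measurable, positive, finite, locally integrable function. -/
def IsWeight (w : Rn n → ℝ≥0∞) : Prop :=
  Measurable w ∧ (∀ x, 0 < w x ∧ w x ≠ ∞) ∧ ∀ Q : Set (Rn n), IsCube Q → wInt w Q ≠ ∞

/-- Average of `w` over `Q`. -/
def avgw (w : Rn n → ℝ≥0∞) (Q : Set (Rn n)) : ℝ≥0∞ := wInt w Q / volume Q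

def A1Const (w : Rn n → ℝ≥0∞) : ℝ≥0∞ :=
  ⨆ (Q : Set (Rn n)) (_ : IsCube Q), avgw w Q * (essInf w (volume.restrict Q))⁻¹

def ApConst (p : ℝ) (w : Rn n → ℝ≥0∞) : ℝ≥0∞ :=
  ⨆ (Q : Set (Rn n)) (_ : IsCube Q),
    avgw w Q * (avgw (fun x => w x ^ (1 - p / (p - 1))) Q) ^ (p - 1)

def MemAp (p : ℝ) (w : Rn n → ℝ≥0∞) : Prop :=
  if p = 1 then A1Const w ≠ ∞ else ApConst p w ≠ ∞

def MemAinf (w : Rn n → ℝ≥0∞) : Prop := ∃ p : ℝ, 1 ≤ p ∧ MemAp p w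

def RHinfConst (w : Rn n → ℝ≥0∞) : ℝ≥0∞ :=
  ⨆ (Q : Set (Rn n)) (_ : IsCube Q), (volume Q / wInt w Q) * essSup w (volume.restrict Q)

/-- Weak `L^p` quasinorm with respect to a measure `μ`. -/
def wkNorm {α : Type*} [MeasurableSpace α] (f : α → ℝ≥0∞) (p : ℝ) (μ : Measure α) : ℝ≥0∞ :=
  ⨆ y : ℝ≥0, (y : ℝ≥0∞) * (μ {x | (y : ℝ≥0∞) < f x}) ^ (1 / p)

/-- The measure `w(x) dx`. -/
def wMeasure (w : Rn n → ℝ≥0∞) : Measure (Rn n) := volume.withDensity w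

/-- Weak `L^{p,∞}(w)` quasinorm. -/
def wkNormW (f : Rn n → ℝ≥0∞) (p : ℝ) (w : Rn n → ℝ≥0∞) : ℝ≥0∞ := wkNorm f p (wMeasure w)

/-- Lorentz `L^{p,1}(w)` norm: `p ∫_0^∞ w({|f| > y})^{1/p} dy`. -/
def lorNorm (f : Rn n → ℝ≥0∞) (p : ℝ) (w : Rn n → ℝ≥0∞) : ℝ≥0∞ :=
  ENNReal.ofReal p * ∫⁻ y in Ioi (0 : ℝ), (wMeasure w {x | ENNReal.ofReal y < f x}) ^ (1 / p)

/-- The Hardy–Littlewood maximal operator over cubes. -/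
def HLM (f : Rn n → ℝ≥0∞) (x : Rn n) : ℝ≥0∞ :=
  ⨆ (Q : Set (Rn n)) (_ : IsCube Q) (_ : x ∈ Q), (∫⁻ y in Q, f y) / volume Q

/-- `‖w‖_{A_p^R}`. -/
def AprNorm (p : ℝ) (w : Rn n → ℝ≥0∞) : ℝ≥0∞ :=
  ⨆ (Q : Set (Rn n)) (_ : IsCube Q) (E : Set (Rn n)) (_ : MeasurableSet E) (_ : E ⊆ Q)
    (_ : 0 < wInt w E), (volume E / volume Q) * (wInt w Q / wInt w E) ^ (1 / p)

def MemApr (p : ℝ) (w : Rn n → ℝ≥0∞) : Prop := AprNorm p w ≠ ∞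

/-- `L^{p',∞}(w)` norm, interpreted as `L^∞(w)` when `p = 1`. -/
def dualWkNorm (p : ℝ) (g : Rn n → ℝ≥0∞) (w : Rn n → ℝ≥0∞) : ℝ≥0∞ :=
  if p = 1 then essSup g (wMeasure w) else wkNormW g (p / (p - 1)) w

/-- `[w]_{A_p^R}`. -/
def AprConst (p : ℝ) (w : Rn n → ℝ≥0∞) : ℝ≥0∞ :=
  ⨆ (Q : Set (Rn n)) (_ : IsCube Q),
    wInt w Q ^ (1 / p) * dualWkNorm p (Q.indicator fun x => (w x)⁻¹) w / volume Q

/-- The multi(sub)linear maximal operator `𝓜`. -/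
def curlyM {m : ℕ} (f : Fin m → Rn n → ℝ≥0∞) (x : Rn n) : ℝ≥0∞ :=
  ⨆ (Q : Set (Rn n)) (_ : IsCube Q) (_ : x ∈ Q), ∏ i, (∫⁻ y in Q, f i y) / volume Q

open ProbabilityTheory

lemma cubeSet_eq_preimage (x : Rn n) (r : ℝ) :
    cubeSet x r = (MeasurableEquiv.toLp 2 (Fin n → ℝ)).symm ⁻¹'
      univ.pi fun i => Icc (x i) (x i + r) := by
  ext y
  simp only [cubeSet, mem_preimage, mem_pi, mem_univ, forall_true_left, mem_Icc]
  rfl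

lemma volume_cubeSet (x : Rn n) (r : ℝ) :
    volume (cubeSet x r) = ENNReal.ofReal r ^ n := by
  rw [cubeSet_eq_preimage,
    (EuclideanSpace.volume_preserving_symm_measurableEquiv_toLp (Fin n)).measure_preimage
      (MeasurableSet.univ_pi fun _ => measurableSet_Icc).nullMeasurableSet, volume_pi_pi]
  simp [Real.volume_Icc]

lemma cubeSet_subset_cubeSet {x y : Rn n} {r s : ℝ} (h : ∀ i, y i ≤ x i ∧ x i + r ≤ y i + s) :
    cubeSet x r ⊆ cubeSet y s :=
  fun _ hz i => ⟨(h i).1.trans (hz i).1, (hz i).2.trans (h i).2⟩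

namespace IsCube

variable {Q : Set (Rn n)}

lemma volume_pos (hQ : IsCube Q) : 0 < volume Q := by
  obtain ⟨x, r, hr, rfl⟩ := hQ
  rw [volume_cubeSet x r]
  exact pos_iff_ne_zero.2 (pow_ne_zero n (ENNReal.ofReal_pos.2 hr).ne')

lemma volume_ne_top (hQ : IsCube Q) : volume Q ≠ ∞ := by
  obtain ⟨x, r, hr, rfl⟩ := hQ
  rw [volume_cubeSet x r]
  exact pow_ne_top ofReal_ne_top

end IsCube

def centeredCube (K : ℝ) : Set (Rn n) := cubeSet (WithLp.toLp 2 fun _ => -K) (2 * K)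

lemma isCube_centeredCube {K : ℝ} (hK : 0 < K) : IsCube (centeredCube K : Set (Rn n)) :=
  ⟨_, 2 * K, by positivity, rfl⟩

lemma closedBall_zero_subset_centeredCube (K : ℝ) :
    Metric.closedBall (0 : Rn n) K ⊆ centeredCube K := by
  intro y hy i
  have hyi : |y i| ≤ K :=
    (PiLp.norm_apply_le y i).trans (mem_closedBall_zero_iff.1 hy)
  obtain ⟨h₁, h₂⟩ := abs_le.1 hyi
  exact ⟨h₁, by linarith⟩

lemma cubeSet_subset_centeredCube {z : Rn n} {r K : ℝ} (hr : 0 ≤ r)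
    (hK : ∀ i, |z i| + r ≤ K) : cubeSet z r ⊆ centeredCube K :=
  cubeSet_subset_cubeSet fun i => by
    constructor <;> linarith [neg_abs_le (z i), le_abs_self (z i), hK i]

lemma exists_centeredCube_superset {Q₁ Q₂ : Set (Rn n)} (h₁ : IsCube Q₁) (h₂ : IsCube Q₂) :
    ∃ K, 0 < K ∧ Q₁ ⊆ centeredCube K ∧ Q₂ ⊆ centeredCube K := by
  obtain ⟨z₁, r₁, hr₁, rfl⟩ := h₁
  obtain ⟨z₂, r₂, hr₂, rfl⟩ := h₂
  have hle : ∀ (z : Rn n) i, |z i| ≤ ∑ j, |z j| := fun z i =>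
    Finset.single_le_sum (f := fun j => |z j|) (fun j _ => abs_nonneg _) (Finset.mem_univ i)
  have hsum : ∀ z : Rn n, 0 ≤ ∑ j, |z j| := fun z => Finset.sum_nonneg fun j _ => abs_nonneg _
  refine ⟨(∑ j, |z₁ j|) + (∑ j, |z₂ j|) + r₁ + r₂, by linarith [hsum z₁, hsum z₂],
    cubeSet_subset_centeredCube hr₁.le fun i => ?_, cubeSet_subset_centeredCube hr₂.le fun i => ?_⟩
  · linarith [hle z₁ i, hsum z₂]
  · linarith [hle z₂ i, hsum z₁]

lemma exists_isCube_setLIntegral_pos {g : Rn n → ℝ≥0∞} (hg : Measurable g)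
    (hg0 : ¬ g =ᵐ[volume] 0) : ∃ Q : Set (Rn n), IsCube Q ∧ 0 < ∫⁻ y in Q, g y := by
  by_contra! h
  refine hg0 ?_
  have hcover : (⋃ k : ℕ, centeredCube (k + 1 : ℝ)) = (univ : Set (Rn n)) :=
    eq_univ_of_univ_subset <| (Metric.iUnion_closedBall_nat 0).symm.subset.trans <|
      iUnion_mono fun k => (closedBall_zero_subset_centeredCube _).trans <|
        cubeSet_subset_cubeSet fun i => by constructor <;> linarith
  rw [← Measure.restrict_univ (μ := volume), ← hcover, Filter.EventuallyEq,
    ae_restrict_iUnion_iff]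
  exact fun k => (lintegral_eq_zero_iff hg).1 <|
    nonpos_iff_eq_zero.1 (h _ (isCube_centeredCube (by positivity)))

lemma le_HLM {g : Rn n → ℝ≥0∞} {Q : Set (Rn n)} (hQ : IsCube Q) {x : Rn n} (hx : x ∈ Q) :
    (∫⁻ y in Q, g y) / volume Q ≤ HLM g x :=
  le_iSup_of_le Q <| le_iSup_of_le hQ <| le_iSup_of_le hx le_rfl

lemma exists_pos_le_HLM_of_isCube {g : Rn n → ℝ≥0∞} (hg : Measurable g)
    (hg0 : ¬ g =ᵐ[volume] 0) {Q : Set (Rn n)} (hQ : IsCube Q) :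
    ∃ c, 0 < c ∧ ∀ x ∈ Q, c ≤ HLM g x := by
  obtain ⟨Q₁, hQ₁, hpos⟩ := exists_isCube_setLIntegral_pos hg hg0
  obtain ⟨K, hK, hQ₁K, hQK⟩ := exists_centeredCube_superset hQ₁ hQ
  have hcube := isCube_centeredCube (n := n) hK
  refine ⟨(∫⁻ y in Q₁, g y) / volume (centeredCube K : Set (Rn n)),
    ENNReal.div_pos hpos.ne' hcube.volume_ne_top, fun x hx => ?_⟩
  exact (ENNReal.div_le_div_right (lintegral_mono_set hQ₁K) _).trans (le_HLM hcube (hQK hx))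

lemma HLM_ne_zero {g : Rn n → ℝ≥0∞} (hg : Measurable g) (hg0 : ¬ g =ᵐ[volume] 0)
    (x : Rn n) : HLM g x ≠ 0 := by
  obtain ⟨c, hc, hle⟩ := exists_pos_le_HLM_of_isCube hg hg0 ⟨x, 1, one_pos, rfl⟩
  exact (hc.trans_le (hle x fun i => ⟨le_rfl, by linarith⟩)).ne'

lemma exists_isCube_ball_subset_lt_avg {g : Rn n → ℝ≥0∞} {Q : Set (Rn n)} (hQ : IsCube Q)
    {x : Rn n} (hx : x ∈ Q) {y : ℝ≥0∞} (hy : y < (∫⁻ z in Q, g z) / volume Q) :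
    ∃ ε > 0, ∃ Q', IsCube Q' ∧ Metric.ball x ε ⊆ Q' ∧ y < (∫⁻ z in Q', g z) / volume Q' := by
  obtain ⟨z, r, hr, rfl⟩ := hQ
  set I := ∫⁻ z in cubeSet z r, g z
  -- `Q` enlarged by `ε` on every side has an average close to that of `Q`
  have hcont : Filter.Tendsto (fun ε : ℝ => I * (ENNReal.ofReal (r + 2 * ε) ^ n)⁻¹) (nhds 0)
      (nhds (I * (ENNReal.ofReal r ^ n)⁻¹)) := by
    refine ENNReal.Tendsto.const_mul ?_
      (Or.inl (ENNReal.inv_ne_zero.2 (pow_ne_top ofReal_ne_top)))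
    have : Continuous fun ε : ℝ => (ENNReal.ofReal (r + 2 * ε) ^ n)⁻¹ :=
      continuous_inv.comp ((ENNReal.continuous_pow n).comp
        (ENNReal.continuous_ofReal.comp (by fun_prop)))
    simpa using this.tendsto 0
  rw [volume_cubeSet, div_eq_mul_inv] at hy
  obtain ⟨ε, hyε, hε⟩ :=
    (((hcont.eventually (eventually_gt_nhds hy)).filter_mono nhdsWithin_le_nhds).and
      (self_mem_nhdsWithin (s := Ioi 0))).exists
  refine ⟨ε, hε, cubeSet (WithLp.toLp 2 fun i => z i - ε) (r + 2 * ε),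
    ⟨_, _, by linarith [hε], rfl⟩, fun x' hx' i => ?_, ?_⟩
  · have hd := (PiLp.dist_apply_le x' x i).trans (Metric.mem_ball.1 hx').le
    rw [Real.dist_eq, abs_le] at hd
    exact ⟨by linarith [(hx i).1], by linarith [(hx i).2]⟩
  · rw [volume_cubeSet, div_eq_mul_inv]
    refine hyε.trans_le (mul_le_mul_left (lintegral_mono_set ?_) _)
    exact cubeSet_subset_cubeSet fun i => by constructor <;> linarith [hε]

lemma lowerSemicontinuous_HLM (g : Rn n → ℝ≥0∞) : LowerSemicontinuous (HLM g) := by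
  intro x y hy
  simp only [HLM, lt_iSup_iff] at hy
  obtain ⟨Q, hQ, hx, hy⟩ := hy
  obtain ⟨ε, hε, Q', hQ', hball, hy'⟩ := exists_isCube_ball_subset_lt_avg hQ hx hy
  filter_upwards [Metric.ball_mem_nhds x hε] with x' hx'
  exact hy'.trans_le (le_HLM hQ' (hball hx'))

lemma measurable_HLM (g : Rn n → ℝ≥0∞) : Measurable (HLM g) :=
  (lowerSemicontinuous_HLM g).measurable

section PowerMeans

variable {α : Type*} [MeasurableSpace α] {μ : Measure α} [IsProbabilityMeasure μ]

lemma inv_rpow_lintegral_le_lintegral_inv_rpow {g : α → ℝ≥0∞} (hg : AEMeasurable g μ)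
    (hg0 : ∀ᵐ x ∂μ, g x ≠ 0) (hgtop : ∀ᵐ x ∂μ, g x ≠ ∞) {s : ℝ} (hs : 0 < s) :
    ((∫⁻ x, g x ∂μ) ^ s)⁻¹ ≤ ∫⁻ x, (g x ^ s)⁻¹ ∂μ := by
  -- Hölder with exponents `(1 + s) / s` and `1 + s` applied to `1 = g ^ a * g ^ (-a)`
  set a := s / (1 + s)
  have ha : a * (1 + s) = s := div_mul_cancel₀ s (by linarith)
  have hconj : ((1 + s) / s).HolderConjugate (1 + s) :=
    (Real.holderConjugate_iff).2 ⟨by rw [lt_div_iff₀ hs]; linarith, by field_simp; ring⟩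
  have hHolder : 1 ≤ (∫⁻ x, g x ∂μ) ^ a * (∫⁻ x, (g x ^ s)⁻¹ ∂μ) ^ (1 / (1 + s)) := by
    have hone : ∫⁻ x, (fun x => g x ^ a) x * (fun x => g x ^ (-a)) x ∂μ = 1 := by
      rw [lintegral_congr_ae (g := fun _ => 1), lintegral_one, measure_univ]
      filter_upwards [hg0, hgtop] with x hx0 hxtop
      rw [← ENNReal.rpow_add _ _ hx0 hxtop, add_neg_cancel, ENNReal.rpow_zero]
    have hpow₁ : ∀ x, (g x ^ a) ^ ((1 + s) / s) = g x := fun x => by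
      rw [← ENNReal.rpow_mul, mul_div_assoc', ha, div_self hs.ne', ENNReal.rpow_one]
    have hpow₂ : ∀ x, (g x ^ (-a)) ^ (1 + s) = (g x ^ s)⁻¹ := fun x => by
      rw [← ENNReal.rpow_mul, neg_mul, ha, ENNReal.rpow_neg]
    have h := ENNReal.lintegral_mul_le_Lp_mul_Lq μ hconj (hg.pow_const a) (hg.pow_const (-a))
    simp only [Pi.mul_apply, hpow₁, hpow₂, one_div_div] at h
    rwa [← hone]
  have hinv : ((∫⁻ x, g x ∂μ) ^ a)⁻¹ ≤ (∫⁻ x, (g x ^ s)⁻¹ ∂μ) ^ (1 / (1 + s)) :=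
    (ENNReal.inv_le_iff_le_mul (fun _ => left_ne_zero_of_mul (one_pos.trans_le hHolder).ne')
      (fun _ => right_ne_zero_of_mul (one_pos.trans_le hHolder).ne')).2 hHolder
  have h := ENNReal.rpow_le_rpow hinv (by linarith : (0 : ℝ) ≤ 1 + s)
  rwa [← ENNReal.rpow_mul, one_div_mul_cancel (by linarith), ENNReal.rpow_one, ENNReal.inv_rpow,
    ← ENNReal.rpow_mul, ha] at h

lemma inv_rpow_prod_lintegral_le {ι : Type*} [Fintype ι] [Nonempty ι] {u : ι → α → ℝ≥0∞}
    (hu : ∀ i, AEMeasurable (u i) μ) (hu0 : ∀ i, ∀ᵐ x ∂μ, u i x ≠ 0)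
    (hutop : ∀ i, ∀ᵐ x ∂μ, u i x ≠ ∞) {r : ℝ} (hr : 0 < r) :
    ((∏ i, ∫⁻ x, u i x ∂μ) ^ r)⁻¹ ≤ ∫⁻ x, ((∏ i, u i x) ^ r)⁻¹ ∂μ := by
  set m : ℝ := (Fintype.card ι : ℝ)
  have hm : 0 < m := Nat.cast_pos.2 Fintype.card_pos
  set g : α → ℝ≥0∞ := fun x => (∏ i, u i x) ^ m⁻¹
  have hg : ∫⁻ x, g x ∂μ ≤ (∏ i, ∫⁻ x, u i x ∂μ) ^ m⁻¹ := by
    simp only [g, ← ENNReal.prod_rpow_of_nonneg (inv_nonneg.2 hm.le)]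
    refine ENNReal.lintegral_prod_norm_pow_le _ (fun i _ => hu i) ?_ fun _ _ => inv_nonneg.2 hm.le
    rw [Finset.sum_const, Finset.card_univ, nsmul_eq_mul, mul_inv_cancel₀ hm.ne']
  have hgm : AEMeasurable g μ :=
    (Finset.aemeasurable_fun_prod _ fun i _ => hu i).pow_const _
  have hg0 : ∀ᵐ x ∂μ, g x ≠ 0 := by
    filter_upwards [ae_all_iff.2 hu0] with x hx
    exact (ENNReal.rpow_pos_of_nonneg (CanonicallyOrderedAdd.prod_pos.2 fun i _ =>
      pos_iff_ne_zero.2 (hx i)) (inv_nonneg.2 hm.le)).ne'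
  have hgtop : ∀ᵐ x ∂μ, g x ≠ ∞ := by
    filter_upwards [ae_all_iff.2 hutop] with x hx
    exact ENNReal.rpow_ne_top_of_nonneg (inv_nonneg.2 hm.le)
      (ENNReal.prod_ne_top fun i _ => hx i)
  have hpow : ∀ y : ℝ≥0∞, (y ^ m⁻¹) ^ (r * m) = y ^ r := fun y => by
    rw [← ENNReal.rpow_mul, show m⁻¹ * (r * m) = r by field_simp]
  calc ((∏ i, ∫⁻ x, u i x ∂μ) ^ r)⁻¹
      ≤ ((∫⁻ x, g x ∂μ) ^ (r * m))⁻¹ := by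
        rw [← hpow]
        exact ENNReal.inv_le_inv.2 (ENNReal.rpow_le_rpow hg (by positivity))
    _ ≤ ∫⁻ x, (g x ^ (r * m))⁻¹ ∂μ :=
        inv_rpow_lintegral_le_lintegral_inv_rpow hgm hg0 hgtop (by positivity)
    _ = ∫⁻ x, ((∏ i, u i x) ^ r)⁻¹ ∂μ := by simp only [g, hpow]

end PowerMeans

section Weights

lemma avgw_eq_lintegral_cond (w : Rn n → ℝ≥0∞) (Q : Set (Rn n)) :
    avgw w Q = ∫⁻ x, w x ∂volume[|Q] := by
  rw [avgw, wInt, ProbabilityTheory.cond, lintegral_smul_measure, smul_eq_mul,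
    ENNReal.div_eq_inv_mul]

variable {Q : Set (Rn n)}

lemma inv_rpow_prod_avgw_le {ι : Type*} [Fintype ι] [Nonempty ι] {u : ι → Rn n → ℝ≥0∞}
    (hu : ∀ i, Measurable (u i)) (hu0 : ∀ i, ∀ᵐ x, u i x ≠ 0) (hutop : ∀ i, ∀ᵐ x, u i x ≠ ∞)
    {r : ℝ} (hr : 0 < r) (hQ : IsCube Q) :
    ((∏ i, avgw (u i) Q) ^ r)⁻¹ ≤ avgw (fun x => ((∏ i, u i x) ^ r)⁻¹) Q := by
  have := cond_isProbabilityMeasure_of_finite hQ.volume_pos.ne' hQ.volume_ne_top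
  simp only [avgw_eq_lintegral_cond]
  exact inv_rpow_prod_lintegral_le (fun i => (hu i).aemeasurable)
    (fun i => cond_absolutelyContinuous.ae_le (hu0 i))
    (fun i => cond_absolutelyContinuous.ae_le (hutop i)) hr

lemma wInt_ne_zero {w : Rn n → ℝ≥0∞} (hw : AEMeasurable w) (hw0 : ∀ᵐ x, w x ≠ 0)
    (hQ : IsCube Q) : wInt w Q ≠ 0 := by
  intro h
  have := ae_restrict_neBot.2 hQ.volume_pos.ne'
  obtain ⟨x, hx, hx0⟩ :=
    (((lintegral_eq_zero_iff' hw.restrict).1 h).and (ae_restrict_of_ae hw0)).exists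
  exact hx0 hx

lemma wInt_ne_top_of_le {w : Rn n → ℝ≥0∞} (hQ : IsCube Q) {K : ℝ≥0∞} (hK : K ≠ ∞)
    (hw : ∀ x ∈ Q, w x ≤ K) : wInt w Q ≠ ∞ :=
  (setLIntegral_lt_top_of_le_nnreal hQ.volume_ne_top ⟨K.toNNReal, fun x hx =>
    (hw x hx).trans_eq (ENNReal.coe_toNNReal hK).symm⟩).ne

lemma essInf_ne_top_of_isCube {u : Rn n → ℝ≥0∞} (hutop : ∀ᵐ x, u x ≠ ∞) (hQ : IsCube Q) :
    essInf u (volume.restrict Q) ≠ ∞ := by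
  have := ae_restrict_neBot.2 hQ.volume_pos.ne'
  obtain ⟨x, hx, hxtop⟩ :=
    ((ae_essInf_le (μ := volume.restrict Q) (f := u)).and (ae_restrict_of_ae hutop)).exists
  exact ne_top_of_le_ne_top hxtop hx

lemma avgw_mul_inv_essInf_le_A1Const (u : Rn n → ℝ≥0∞) (hQ : IsCube Q) :
    avgw u Q * (essInf u (volume.restrict Q))⁻¹ ≤ A1Const u :=
  le_iSup₂ (f := fun Q (_ : IsCube Q) => avgw u Q * (essInf u (volume.restrict Q))⁻¹) Q hQ

lemma essInf_ne_zero_of_A1Const_ne_top {u : Rn n → ℝ≥0∞} (hu : A1Const u ≠ ∞)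
    (hQ : IsCube Q) (ha : avgw u Q ≠ 0) : essInf u (volume.restrict Q) ≠ 0 := by
  intro h
  refine hu (top_le_iff.1 ?_)
  simpa [h, ENNReal.mul_top ha] using avgw_mul_inv_essInf_le_A1Const u hQ

lemma avgw_le_A1Const_mul_essInf {u : Rn n → ℝ≥0∞} (hQ : IsCube Q)
    (he0 : essInf u (volume.restrict Q) ≠ 0) (hetop : essInf u (volume.restrict Q) ≠ ∞) :
    avgw u Q ≤ A1Const u * essInf u (volume.restrict Q) := by
  set e := essInf u (volume.restrict Q)
  calc avgw u Q = avgw u Q * e⁻¹ * e := by rw [mul_assoc, ENNReal.inv_mul_cancel he0 hetop, mul_one]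
    _ ≤ A1Const u * e := mul_le_mul_left (avgw_mul_inv_essInf_le_A1Const u hQ) _

lemma one_le_RHinfConst {w : Rn n → ℝ≥0∞} (hQ : IsCube Q) (h0 : wInt w Q ≠ 0)
    (htop : wInt w Q ≠ ∞) : 1 ≤ RHinfConst w := by
  have hle : wInt w Q ≤ volume Q * essSup w (volume.restrict Q) :=
    (lintegral_mono_ae ae_le_essSup).trans_eq (by rw [setLIntegral_const, mul_comm])
  refine le_trans ?_ (le_iSup₂ (f := fun Q (_ : IsCube Q) =>
    volume Q / wInt w Q * essSup w (volume.restrict Q)) Q hQ)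
  rwa [← ENNReal.mul_div_right_comm, ENNReal.le_div_iff_mul_le (Or.inl h0) (Or.inl htop),
    one_mul]

lemma RHinfConst_inv_prod_rpow_le {ι : Type*} [Fintype ι] [Nonempty ι]
    {u : ι → Rn n → ℝ≥0∞} (hu : ∀ i, Measurable (u i)) (hu0 : ∀ i, ∀ᵐ x, u i x ≠ 0)
    (hutop : ∀ i, ∀ᵐ x, u i x ≠ ∞) {D : ℝ≥0∞} (hD : ∀ i, A1Const (u i) ≤ D) {r : ℝ} (hr : 0 < r) :
    RHinfConst (fun x => ((∏ i, u i x) ^ r)⁻¹) ≤ D ^ (Fintype.card ι * r) := by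
  rcases eq_or_ne D ∞ with rfl | hDtop
  · rw [ENNReal.top_rpow_of_pos (by positivity)]
    exact le_top
  refine iSup₂_le fun Q hQ => ?_
  set e := fun i => essInf (u i) (volume.restrict Q)
  set a := fun i => avgw (u i) Q
  have hetop : ∀ i, e i ≠ ∞ := fun i => essInf_ne_top_of_isCube (hutop i) hQ
  have he0 : ∀ i, e i ≠ 0 := fun i =>
    essInf_ne_zero_of_A1Const_ne_top (ne_top_of_le_ne_top hDtop (hD i)) hQ <|
      ENNReal.div_ne_zero.2 ⟨wInt_ne_zero (hu i).aemeasurable (hu0 i) hQ, hQ.volume_ne_top⟩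
  have ha : ∏ i, a i ≤ D ^ Fintype.card ι * ∏ i, e i := by
    rw [← Finset.card_univ, ← Finset.prod_const, ← Finset.prod_mul_distrib]
    exact Finset.prod_le_prod' fun i _ =>
      (avgw_le_A1Const_mul_essInf hQ (he0 i) (hetop i)).trans (mul_le_mul_left (hD i) _)
  have hsup :
      essSup (fun x => ((∏ i, u i x) ^ r)⁻¹) (volume.restrict Q) ≤ ((∏ i, e i) ^ r)⁻¹ := by
    refine essSup_le_of_ae_le _ ?_
    filter_upwards [ae_all_iff.2 fun i => ae_essInf_le (μ := volume.restrict Q) (f := u i)]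
      with x hx
    exact ENNReal.inv_le_inv.2 <|
      ENNReal.rpow_le_rpow (Finset.prod_le_prod' fun i _ => hx i) hr.le
  have havg : volume Q / wInt (fun x => ((∏ i, u i x) ^ r)⁻¹) Q ≤ (∏ i, a i) ^ r := by
    rw [← ENNReal.inv_div (Or.inl hQ.volume_ne_top) (Or.inl hQ.volume_pos.ne'), ← avgw,
      ENNReal.inv_le_iff_inv_le]
    exact inv_rpow_prod_avgw_le hu hu0 hutop hr hQ
  have hE0 : (∏ i, e i) ^ r ≠ 0 :=
    (ENNReal.rpow_pos (pos_iff_ne_zero.2 (Finset.prod_ne_zero_iff.2 fun i _ => he0 i))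
      (ENNReal.prod_ne_top fun i _ => hetop i)).ne'
  have hEtop : (∏ i, e i) ^ r ≠ ∞ :=
    ENNReal.rpow_ne_top_of_nonneg hr.le (ENNReal.prod_ne_top fun i _ => hetop i)
  calc volume Q / wInt (fun x => ((∏ i, u i x) ^ r)⁻¹) Q *
        essSup (fun x => ((∏ i, u i x) ^ r)⁻¹) (volume.restrict Q)
      ≤ (D ^ Fintype.card ι * ∏ i, e i) ^ r * ((∏ i, e i) ^ r)⁻¹ :=
        mul_le_mul' (havg.trans (ENNReal.rpow_le_rpow ha hr.le)) hsup
    _ = D ^ (Fintype.card ι * r) := by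
        rw [ENNReal.mul_rpow_of_nonneg _ _ hr.le, mul_assoc, ENNReal.mul_inv_cancel hE0 hEtop,
          mul_one, ← ENNReal.rpow_natCast, ← ENNReal.rpow_mul]

lemma prod_inv_rpow_eq_inv_prod_rpow_rpow {ι : Type*} [Fintype ι] {M : ι → ℝ≥0∞}
    (hM : ∀ i, M i ≠ 0) (p : ℝ) {δ : ℝ} (hδ : 0 < δ) :
    (∏ i, (M i)⁻¹) ^ p = ((∏ i, M i ^ δ) ^ (p / δ))⁻¹ := by
  rw [ENNReal.prod_rpow_of_nonneg hδ.le, ← ENNReal.rpow_mul, mul_div_cancel₀ _ hδ.ne',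
    ← ENNReal.inv_rpow, ENNReal.prod_inv_distrib fun i _ _ _ _ => Or.inl (hM i)]

lemma one_le_RHinfConst_prod_inv_HLM_rpow {ι : Type*} [Fintype ι] {f : ι → Rn n → ℝ≥0∞}
    (hf : ∀ i, Measurable (f i)) (hfin : ∀ i, ∀ᵐ x, HLM (f i) x ≠ ∞)
    (hnz : ∀ i, ¬ f i =ᵐ[volume] 0) {p : ℝ} (hp : 0 < p) :
    1 ≤ RHinfConst (fun x => (∏ i, (HLM (f i) x)⁻¹) ^ p) := by
  have hQ₀ : IsCube (cubeSet (0 : Rn n) 1) := ⟨0, 1, one_pos, rfl⟩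
  choose c hc0 hc using fun i => exists_pos_le_HLM_of_isCube (hf i) (hnz i) hQ₀
  have hmeas : Measurable fun x => (∏ i, (HLM (f i) x)⁻¹) ^ p :=
    (Finset.measurable_prod _ fun i _ => (measurable_HLM (f i)).inv).pow_const p
  have hne0 : ∀ᵐ x, (∏ i, (HLM (f i) x)⁻¹) ^ p ≠ 0 := by
    filter_upwards [ae_all_iff.2 hfin] with x hx
    refine (ENNReal.rpow_pos (CanonicallyOrderedAdd.prod_pos.2 fun i _ => ?_) ?_).ne'
    · exact ENNReal.inv_pos.2 (hx i)
    · exact ENNReal.prod_ne_top fun i _ => ENNReal.inv_ne_top.2 (HLM_ne_zero (hf i) (hnz i) x)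
  have hbdd : ∀ x ∈ cubeSet (0 : Rn n) 1,
      (∏ i, (HLM (f i) x)⁻¹) ^ p ≤ (∏ i, (c i)⁻¹) ^ p := fun x hx =>
    ENNReal.rpow_le_rpow (Finset.prod_le_prod' fun i _ => ENNReal.inv_le_inv.2 (hc i x hx)) hp.le
  refine one_le_RHinfConst hQ₀ (wInt_ne_zero hmeas.aemeasurable hne0 hQ₀) ?_
  exact wInt_ne_top_of_le hQ₀ (ENNReal.rpow_ne_top_of_nonneg hp.le
    (ENNReal.prod_ne_top fun i _ => ENNReal.inv_ne_top.2 (hc0 i).ne')) hbdd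

end Weights

theorem stmt4_general {n : ℕ} (m : ℕ) (hm : 1 ≤ m) (p : ℝ) (hp : 1 ≤ p) (Cn : ℝ≥0∞)
    (hCn : ∀ g : Rn n → ℝ≥0∞, Measurable g → ∀ δ : ℝ, 0 < δ → δ < 1 →
      A1Const (fun x => HLM g x ^ δ) ≤ Cn / ENNReal.ofReal (1 - δ))
    (f : Fin m → Rn n → ℝ≥0∞) (hf : ∀ i, Measurable (f i))
    (hfin : ∀ i, ∀ᵐ x ∂(volume : Measure (Rn n)), HLM (f i) x ≠ ∞)
    (hnz : ∀ i, ¬ (f i =ᵐ[(volume : Measure (Rn n))] 0)) :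
    1 ≤ RHinfConst (fun x => (∏ i, (HLM (f i) x)⁻¹) ^ p) ∧
      RHinfConst (fun x => (∏ i, (HLM (f i) x)⁻¹) ^ p) ≤
        ⨅ (δ : ℝ) (_ : 0 < δ) (_ : δ < 1),
          (Cn / ENNReal.ofReal (1 - δ)) ^ (m * p / δ) := by
  have hp0 : 0 < p := by linarith
  refine ⟨one_le_RHinfConst_prod_inv_HLM_rpow hf hfin hnz hp0,
    le_iInf fun δ => le_iInf₂ fun hδ hδ1 => ?_⟩
  have hM0 : ∀ i x, HLM (f i) x ≠ 0 := fun i => HLM_ne_zero (hf i) (hnz i)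
  have : Nonempty (Fin m) := ⟨⟨0, hm⟩⟩
  have hw : (fun x => (∏ i, (HLM (f i) x)⁻¹) ^ p) =
      fun x => ((∏ i, HLM (f i) x ^ δ) ^ (p / δ))⁻¹ :=
    funext fun x => prod_inv_rpow_eq_inv_prod_rpow_rpow (fun i => hM0 i x) p hδ
  rw [hw, mul_div_assoc]
  simpa using RHinfConst_inv_prod_rpow_le (fun i => (measurable_HLM (f i)).pow_const δ)
    (fun i => ae_of_all _ fun x =>
      (ENNReal.rpow_pos_of_nonneg (pos_iff_ne_zero.2 (hM0 i x)) hδ.le).ne')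
    (fun i => (hfin i).mono fun x hx => ENNReal.rpow_ne_top_of_nonneg hδ.le hx)
    (fun i => hCn (f i) (hf i) δ hδ hδ1) (div_pos hp0 hδ)

/-- For `v = ∏ (Mf_i)⁻¹` one has `v^p ∈ RH_∞` with
`1 ≤ [v^p]_{RH_∞} ≤ inf_{0<δ<1} (c_n/(1-δ))^{mp/δ}`, where `c_n` is the dimensional
constant from the Coifman–Rochberg `A_1` bound for `(Mg)^δ`. -/
theorem stmt4 {n : ℕ} (m : ℕ) (hm : 1 ≤ m) (p : ℝ) (hp : 1 ≤ p) (Cn : ℝ≥0∞)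
    (hCn : ∀ g : Rn n → ℝ≥0∞, Measurable g → ∀ δ : ℝ, 0 < δ → δ < 1 →
      A1Const (fun x => HLM g x ^ δ) ≤ Cn / ENNReal.ofReal (1 - δ))
    (f : Fin m → Rn n → ℝ≥0∞) (hf : ∀ i, Measurable (f i))
    (hloc : ∀ i, ∀ Q : Set (Rn n), IsCube Q → (∫⁻ y in Q, f i y) ≠ ∞)
    (hfin : ∀ i, ∀ᵐ x ∂(volume : Measure (Rn n)), HLM (f i) x ≠ ∞)
    (hnz : ∀ i, ¬ (f i =ᵐ[(volume : Measure (Rn n))] 0)) :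
    1 ≤ RHinfConst (fun x => (∏ i, (HLM (f i) x)⁻¹) ^ p) ∧
      RHinfConst (fun x => (∏ i, (HLM (f i) x)⁻¹) ^ p) ≤
        ⨅ (δ : ℝ) (_ : 0 < δ) (_ : δ < 1),
          (Cn / ENNReal.ofReal (1 - δ)) ^ (m * p / δ) :=
  stmt4_general m hm p hp Cn hCn f hf hfin hnz
end
end

section
/- Let $1 \leq p_i < \infty$, $\frac{1}{p} = \sum_i \frac{1}{p_i}$, and weights $w_1,\dots,w_m,\nu$. Then $[\vec{w},\nu]_{A_{\vec{P}}^{\mathcal{R}}} \leq \|\vec{w},\nu\|_{A_{\vec{P}}^{\mathcal{R}}} \leq p_1\cdots p_m\,[\vec{w},\nu]_{A_{\vec{P}}^{\mathcal{R}}}$, where $\|\vec{w},\nu\|_{A_{\vec{P}}^{\mathcal{R}}} = \sup_Q \nu(Q)^{1/p}\prod_{i=1}^m \sup_{E_i \subseteq Q} \frac{|E_i|}{|Q|} w_i(E_i)^{-1/p_i}$ and $[\vec{w},\nu]_{A_{\vec{P}}^{\mathcal{R}}} = \sup_Q \nu(Q)^{1/p}\prod_{i=1}^m \frac{\|\chi_Q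 w_i^{-1}\|_{L^{p_i',\infty}(w_i)}}{|Q|}$. -/
/-
For `g = χ_Q w⁻¹` and `y > 0`, the level set `F = {g > y}` lies in `Q` and `w < 1/y` on it, so
`y w(F) ≤ |F|`; hence `y w(F)^{1/p'} ≤ |F| w(F)^{-1/p}`, and the `L^{p',∞}(w)` norm of `g` (its
`L^∞(w)` norm when `p = 1`) is at most `sup_{E ⊆ Q} |E| w(E)^{-1/p}`.
Conversely `|E| = ∫_E g dw` for `E ⊆ Q`, and Kolmogorov's inequality
`∫_E g dμ ≤ q/(q-1) ‖g‖_{L^{q,∞}(μ)} μ(E)^{1-1/q}`, obtained from the layer cake formula by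
cutting at the optimal height, gives with `q = p'` (so `q/(q-1) = p`) the bound
`|E| w(E)^{-1/p} ≤ p ‖g‖_{L^{p',∞}(w)}`.
Multiplying over `i` and taking suprema over cubes gives both inequalities.
-/

open MeasureTheory Set ENNReal NNReal

noncomputable section

variable {n : ℕ}

/-- The `A_{P⃗}^R` constant `[w⃗, ν]`. -/
def AvecConst {n m : ℕ} (pp : Fin m → ℝ) (p : ℝ) (w : Fin m → Rn n → ℝ≥0∞)
    (ν : Rn n → ℝ≥0∞) : ℝ≥0∞ :=
  ⨆ (Q : Set (Rn n)) (_ : IsCube Q),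
    wInt ν Q ^ (1 / p) *
      ∏ i, dualWkNorm (pp i) (Q.indicator fun x => (w i x)⁻¹) (w i) / volume Q

/-- The Kerman–Torchinsky style constant `‖w⃗, ν‖`. -/
def AvecNorm {n m : ℕ} (pp : Fin m → ℝ) (p : ℝ) (w : Fin m → Rn n → ℝ≥0∞)
    (ν : Rn n → ℝ≥0∞) : ℝ≥0∞ :=
  ⨆ (Q : Set (Rn n)) (_ : IsCube Q),
    wInt ν Q ^ (1 / p) *
      ∏ i, ⨆ (E : Set (Rn n)) (_ : MeasurableSet E) (_ : E ⊆ Q) (_ : 0 < wInt (w i) E),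
        (volume E / volume Q) * wInt (w i) E ^ (-(1 / pp i))

section WeakType

variable {α : Type*} [MeasurableSpace α] {μ : Measure α} {f : α → ℝ≥0∞} {q : ℝ}

lemma mul_meas_lt_rpow_le_wkNorm (y : ℝ≥0) :
    y * μ {x | (y : ℝ≥0∞) < f x} ^ (1 / q) ≤ wkNorm f q μ :=
  le_iSup (fun y : ℝ≥0 => (y : ℝ≥0∞) * μ {x | (y : ℝ≥0∞) < f x} ^ (1 / q)) y

lemma meas_lt_le_wkNorm_rpow_mul (hq : 0 < q) {y : ℝ≥0} (hy : y ≠ 0) :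
    μ {x | (y : ℝ≥0∞) < f x} ≤ wkNorm f q μ ^ q * (y : ℝ≥0∞) ^ (-q) := by
  have hy0 : (y : ℝ≥0∞) ^ q ≠ 0 := by simp [hy]
  have hyt : (y : ℝ≥0∞) ^ q ≠ ∞ := by simp [hq.le]
  have hpow : (y : ℝ≥0∞) ^ q * μ {x | (y : ℝ≥0∞) < f x} ≤ wkNorm f q μ ^ q := by
    calc (y : ℝ≥0∞) ^ q * μ {x | (y : ℝ≥0∞) < f x}
        = ((y : ℝ≥0∞) * μ {x | (y : ℝ≥0∞) < f x} ^ (1 / q)) ^ q := by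
          rw [ENNReal.mul_rpow_of_nonneg _ _ hq.le, ← ENNReal.rpow_mul,
            one_div_mul_cancel hq.ne', ENNReal.rpow_one]
      _ ≤ wkNorm f q μ ^ q := ENNReal.rpow_le_rpow (mul_meas_lt_rpow_le_wkNorm y) hq.le
  rw [ENNReal.rpow_neg, ← div_eq_mul_inv]
  exact ENNReal.le_div_iff_mul_le (Or.inl hy0) (Or.inl hyt) |>.2 (by rwa [mul_comm] at hpow)

lemma lintegral_eq_lintegral_meas_ofReal_lt (hf : AEMeasurable f μ) (hfin : ∀ᵐ x ∂μ, f x ≠ ∞) :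
    ∫⁻ x, f x ∂μ = ∫⁻ t in Ioi 0, μ {x | ENNReal.ofReal t < f x} := by
  calc ∫⁻ x, f x ∂μ = ∫⁻ x, ENNReal.ofReal (f x).toReal ∂μ :=
        lintegral_congr_ae <| hfin.mono fun x hx => (ENNReal.ofReal_toReal hx).symm
    _ = ∫⁻ t in Ioi 0, μ {x | t < (f x).toReal} :=
        lintegral_eq_lintegral_meas_lt μ (ae_of_all _ fun _ => ENNReal.toReal_nonneg)
          hf.ennreal_toReal
    _ = ∫⁻ t in Ioi 0, μ {x | ENNReal.ofReal t < f x} := by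
        refine setLIntegral_congr_fun measurableSet_Ioi fun t ht => measure_congr ?_
        filter_upwards [hfin] with x hx
        exact propext (ENNReal.ofReal_lt_iff_lt_toReal (le_of_lt ht) hx).symm

lemma lintegral_Ioi_ofReal_rpow_neg (hq : 1 < q) {T : ℝ} (hT : 0 < T) :
    ∫⁻ t in Ioi T, ENNReal.ofReal t ^ (-q) = ENNReal.ofReal (T ^ (1 - q) / (q - 1)) := by
  have hlt : -q < -1 := by linarith
  calc ∫⁻ t in Ioi T, ENNReal.ofReal t ^ (-q) = ∫⁻ t in Ioi T, ENNReal.ofReal (t ^ (-q)) :=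
        setLIntegral_congr_fun measurableSet_Ioi fun t ht =>
          ENNReal.ofReal_rpow_of_pos (hT.trans ht)
    _ = ENNReal.ofReal (∫ t in Ioi T, t ^ (-q)) := by
        rw [ofReal_integral_eq_lintegral_ofReal (integrableOn_Ioi_rpow_of_lt hlt hT)]
        filter_upwards [ae_restrict_mem measurableSet_Ioi] with t ht
        exact Real.rpow_nonneg (hT.trans ht).le _
    _ = ENNReal.ofReal (T ^ (1 - q) / (q - 1)) := by
        rw [integral_Ioi_rpow_of_lt hlt hT]
        congr 1
        rw [show -q + 1 = 1 - q by ring, neg_div, ← div_neg, neg_sub]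

lemma setLIntegral_le_of_wkNorm (hf : AEMeasurable f μ) (hfin : ∀ᵐ x ∂μ, f x ≠ ∞)
    (hq : 1 < q) (E : Set α) {T : ℝ} (hT : 0 < T) :
    ∫⁻ x in E, f x ∂μ ≤
      μ E * ENNReal.ofReal T + wkNorm f q μ ^ q * ENNReal.ofReal (T ^ (1 - q) / (q - 1)) := by
  have hdist : ∀ t ∈ Ioi T, μ.restrict E {x | ENNReal.ofReal t < f x} ≤
      wkNorm f q μ ^ q * ENNReal.ofReal t ^ (-q) := fun t ht =>
    (Measure.restrict_le_self _).trans
      (meas_lt_le_wkNorm_rpow_mul (by linarith) (by simpa using hT.trans ht))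
  rw [lintegral_eq_lintegral_meas_ofReal_lt hf.restrict (ae_restrict_of_ae hfin),
    ← Ioc_union_Ioi_eq_Ioi hT.le]
  refine (lintegral_union_le _ _ _).trans (add_le_add ?_ ?_)
  · calc ∫⁻ t in Ioc 0 T, μ.restrict E {x | ENNReal.ofReal t < f x}
        ≤ ∫⁻ _ in Ioc 0 T, μ E :=
          lintegral_mono fun t => (measure_mono (subset_univ _)).trans_eq
            (Measure.restrict_apply_univ E)
      _ = μ E * ENNReal.ofReal T := by rw [setLIntegral_const, Real.volume_Ioc, sub_zero]
  · calc ∫⁻ t in Ioi T, μ.restrict E {x | ENNReal.ofReal t < f x}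
        ≤ ∫⁻ t in Ioi T, wkNorm f q μ ^ q * ENNReal.ofReal t ^ (-q) :=
          setLIntegral_mono' measurableSet_Ioi hdist
      _ = wkNorm f q μ ^ q * ENNReal.ofReal (T ^ (1 - q) / (q - 1)) := by
          rw [lintegral_const_mul _ (by fun_prop), lintegral_Ioi_ofReal_rpow_neg hq hT]

lemma mul_add_rpow_eq_at_optimal_cut (hq : 1 < q) {m a : ℝ} (hm : 0 < m) (ha : 0 < a) :
    m * (a * m ^ (-1 / q)) + a ^ q * ((a * m ^ (-1 / q)) ^ (1 - q) / (q - 1)) =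
      q / (q - 1) * a * m ^ (1 - 1 / q) := by
  have hq0 : q ≠ 0 := by positivity
  have hq1 : q - 1 ≠ 0 := by linarith
  have h1 : m * m ^ (-1 / q) = m ^ (1 - 1 / q) := by
    rw [show 1 - 1 / q = 1 + -1 / q by ring, Real.rpow_add hm, Real.rpow_one]
  have h2 : a ^ q * (a * m ^ (-1 / q)) ^ (1 - q) = a * m ^ (1 - 1 / q) := by
    rw [Real.mul_rpow ha.le (by positivity), ← Real.rpow_mul hm.le, ← mul_assoc,
      ← Real.rpow_add ha, add_sub_cancel, Real.rpow_one]
    congr 2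
    field_simp
    ring
  rw [← mul_div_assoc, h2, ← mul_assoc, mul_comm m, mul_assoc, h1]
  field_simp
  ring

lemma setLIntegral_le_wkNorm_mul_rpow (hf : AEMeasurable f μ) (hfin : ∀ᵐ x ∂μ, f x ≠ ∞)
    (hq : 1 < q) (E : Set α) :
    ∫⁻ x in E, f x ∂μ ≤ ENNReal.ofReal (q / (q - 1)) * wkNorm f q μ * μ E ^ (1 - 1 / q) := by
  have hq0 : 0 < q := by linarith
  have hr : 0 < 1 - 1 / q := by rw [sub_pos, div_lt_one hq0]; exact hq
  rcases eq_or_ne (μ E) 0 with hM0 | hM0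
  · simp [Measure.restrict_eq_zero.2 hM0]
  rcases eq_or_ne (wkNorm f q μ) 0 with hN0 | hN0
  · have hnull : ∀ t ∈ Ioi (0 : ℝ), μ.restrict E {x | ENNReal.ofReal t < f x} = 0 :=
      fun t ht => le_antisymm (((Measure.restrict_le_self _).trans
        (meas_lt_le_wkNorm_rpow_mul hq0 (by simpa using ht))).trans_eq (by simp [hN0, hq0]))
        zero_le
    rw [lintegral_eq_lintegral_meas_ofReal_lt hf.restrict (ae_restrict_of_ae hfin),
      setLIntegral_congr_fun measurableSet_Ioi hnull, lintegral_zero]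
    exact zero_le
  have hc : ENNReal.ofReal (q / (q - 1)) ≠ 0 := by
    simp only [ne_eq, ENNReal.ofReal_eq_zero, not_le]
    exact div_pos hq0 (by linarith)
  rcases eq_or_ne (wkNorm f q μ) ∞ with hNt | hNt
  · rw [hNt, ENNReal.mul_top hc, ENNReal.top_mul (ENNReal.rpow_pos_of_nonneg
      (pos_iff_ne_zero.2 hM0) hr.le).ne']
    exact le_top
  rcases eq_or_ne (μ E) ∞ with hMt | hMt
  · rw [hMt, ENNReal.top_rpow_of_pos hr, ENNReal.mul_top (mul_ne_zero hc hN0)]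
    exact le_top
  obtain ⟨m, hm, hmE⟩ : ∃ m, 0 < m ∧ μ E = ENNReal.ofReal m :=
    ⟨_, ENNReal.toReal_pos hM0 hMt, (ENNReal.ofReal_toReal hMt).symm⟩
  obtain ⟨a, ha, haN⟩ : ∃ a, 0 < a ∧ wkNorm f q μ = ENNReal.ofReal a :=
    ⟨_, ENNReal.toReal_pos hN0 hNt, (ENNReal.ofReal_toReal hNt).symm⟩
  -- the cut `T = a m^{-1/q}` balances the two terms of `setLIntegral_le_of_wkNorm`
  have hT : 0 < a * m ^ (-1 / q) := by positivity
  calc ∫⁻ x in E, f x ∂μ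
      ≤ μ E * ENNReal.ofReal (a * m ^ (-1 / q)) + wkNorm f q μ ^ q *
          ENNReal.ofReal ((a * m ^ (-1 / q)) ^ (1 - q) / (q - 1)) :=
        setLIntegral_le_of_wkNorm hf hfin hq E hT
    _ = ENNReal.ofReal (m * (a * m ^ (-1 / q)) +
          a ^ q * ((a * m ^ (-1 / q)) ^ (1 - q) / (q - 1))) := by
        rw [hmE, haN, ENNReal.ofReal_rpow_of_nonneg ha.le hq0.le, ← ENNReal.ofReal_mul hm.le,
          ← ENNReal.ofReal_mul (by positivity), ← ENNReal.ofReal_add (by positivity)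
          (mul_nonneg (by positivity) (div_nonneg (by positivity) (by linarith)))]
    _ = ENNReal.ofReal (q / (q - 1)) * wkNorm f q μ * μ E ^ (1 - 1 / q) := by
        rw [mul_add_rpow_eq_at_optimal_cut hq hm ha, hmE, haN, ENNReal.ofReal_rpow_of_pos hm,
          ENNReal.ofReal_mul (by positivity), ENNReal.ofReal_mul (div_pos hq0 (by linarith)).le]

end WeakType

lemma IsCube.measurableSet {Q : Set (Rn n)} (hQ : IsCube Q) : MeasurableSet Q := by
  obtain ⟨x, r, -, rfl⟩ := hQ
  have : cubeSet x r = ⋂ i, (fun y : Rn n => y i) ⁻¹' Icc (x i) (x i + r) := by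
    ext y; simp [cubeSet]
  rw [this]
  exact MeasurableSet.iInter fun i => measurableSet_Icc.preimage (by fun_prop)

def subsetSup (p : ℝ) (w : Rn n → ℝ≥0∞) (Q : Set (Rn n)) : ℝ≥0∞ :=
  ⨆ (E : Set (Rn n)) (_ : MeasurableSet E) (_ : E ⊆ Q) (_ : 0 < wInt w E),
    volume E * wInt w E ^ (-(1 / p))

section IndicatorInv

variable {p : ℝ} {w : Rn n → ℝ≥0∞} {Q E : Set (Rn n)}

lemma le_subsetSup (hE : MeasurableSet E) (hEQ : E ⊆ Q) (hwE : 0 < wInt w E) :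
    volume E * wInt w E ^ (-(1 / p)) ≤ subsetSup p w Q :=
  le_iSup_of_le E <| le_iSup_of_le hE <| le_iSup_of_le hEQ <| le_iSup_of_le hwE le_rfl

lemma subsetSup_div (p : ℝ) (w : Rn n → ℝ≥0∞) (Q : Set (Rn n)) (V : ℝ≥0∞) :
    subsetSup p w Q / V = ⨆ (E : Set (Rn n)) (_ : MeasurableSet E) (_ : E ⊆ Q)
      (_ : 0 < wInt w E), volume E / V * wInt w E ^ (-(1 / p)) := by
  simp only [subsetSup, div_eq_mul_inv, ENNReal.iSup_mul, mul_right_comm]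

lemma setOf_lt_indicator_inv_subset (c : ℝ≥0∞) :
    {x | c < Q.indicator (fun x => (w x)⁻¹) x} ⊆ Q := fun x hx => by
  by_contra hxQ
  simp [indicator_of_notMem hxQ] at hx

lemma measurableSet_setOf_lt_indicator_inv (hw : Measurable w) (hQ : MeasurableSet Q)
    (c : ℝ≥0∞) : MeasurableSet {x | c < Q.indicator (fun x => (w x)⁻¹) x} :=
  measurableSet_lt measurable_const (hw.inv.indicator hQ)

lemma mul_wInt_setOf_lt_indicator_inv_le (c : ℝ≥0∞) :
    c * wInt w {x | c < Q.indicator (fun x => (w x)⁻¹) x} ≤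
      volume {x | c < Q.indicator (fun x => (w x)⁻¹) x} := by
  set F := {x | c < Q.indicator (fun x => (w x)⁻¹) x}
  have hwF : ∀ x ∈ F, w x ≤ c⁻¹ := fun x hx => by
    have hx' : c < (w x)⁻¹ := by
      simpa [F, indicator_of_mem (setOf_lt_indicator_inv_subset c hx)] using hx
    exact (ENNReal.lt_inv_iff_lt_inv.1 hx').le
  calc c * wInt w F ≤ c * (c⁻¹ * volume F) := by
        gcongr
        exact (setLIntegral_mono measurable_const hwF).trans_eq (setLIntegral_const _ _)
    _ ≤ volume F := by
        rw [← mul_assoc]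
        exact mul_le_of_le_one_left zero_le (ENNReal.mul_inv_le_one c)

lemma wMeasure_apply (w : Rn n → ℝ≥0∞) (hE : MeasurableSet E) : wMeasure w E = wInt w E :=
  withDensity_apply _ hE

lemma essSup_indicator_inv_le_subsetSup (hw : Measurable w) (hQ : MeasurableSet Q)
    (hQw : wInt w Q ≠ ∞) :
    essSup (Q.indicator fun x => (w x)⁻¹) (wMeasure w) ≤ subsetSup 1 w Q := by
  refine le_of_forall_lt_imp_le_of_dense fun c hc => ?_
  set F := {x | c < Q.indicator (fun x => (w x)⁻¹) x}
  have hF := measurableSet_setOf_lt_indicator_inv hw hQ c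
  have hwF0 : wInt w F ≠ 0 := by
    rw [← wMeasure_apply w hF]
    intro h
    exact hc.not_ge (essSup_le_of_ae_le c (measure_eq_zero_iff_ae_notMem.1 h |>.mono
      fun x hx => not_lt.1 hx))
  have hwFt : wInt w F ≠ ∞ :=
    ne_top_of_le_ne_top hQw (lintegral_mono_set (setOf_lt_indicator_inv_subset c))
  calc c = c * wInt w F * (wInt w F)⁻¹ := by
        rw [mul_assoc, ENNReal.mul_inv_cancel hwF0 hwFt, mul_one]
    _ ≤ volume F * wInt w F ^ (-(1 / (1 : ℝ))) := by
        rw [one_div_one, ENNReal.rpow_neg_one]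
        gcongr
        exact mul_wInt_setOf_lt_indicator_inv_le c
    _ ≤ subsetSup 1 w Q :=
        le_subsetSup hF (setOf_lt_indicator_inv_subset c) (pos_iff_ne_zero.2 hwF0)

lemma wkNormW_indicator_inv_le_subsetSup (hw : Measurable w) (hQ : MeasurableSet Q)
    (hQw : wInt w Q ≠ ∞) (hp : 1 < p) :
    wkNormW (Q.indicator fun x => (w x)⁻¹) (p / (p - 1)) w ≤ subsetSup p w Q := by
  have hexp : 1 / (p / (p - 1)) = 1 + -(1 / p) := by
    field_simp [show p - 1 ≠ 0 by linarith]
    ring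
  refine iSup_le fun y => ?_
  set F := {x | (y : ℝ≥0∞) < Q.indicator (fun x => (w x)⁻¹) x}
  have hF := measurableSet_setOf_lt_indicator_inv hw hQ y
  have hwFt : wInt w F ≠ ∞ :=
    ne_top_of_le_ne_top hQw (lintegral_mono_set (setOf_lt_indicator_inv_subset _))
  rw [wMeasure_apply w hF]
  rcases eq_or_ne (wInt w F) 0 with hwF0 | hwF0
  · rw [hwF0, ENNReal.zero_rpow_of_pos (one_div_pos.2 (div_pos (by linarith) (by linarith))),
      mul_zero]
    exact zero_le
  calc (y : ℝ≥0∞) * wInt w F ^ (1 / (p / (p - 1)))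
      = y * wInt w F * wInt w F ^ (-(1 / p)) := by
        rw [hexp, ENNReal.rpow_add _ _ hwF0 hwFt, ENNReal.rpow_one, mul_assoc]
    _ ≤ volume F * wInt w F ^ (-(1 / p)) := by
        gcongr
        exact mul_wInt_setOf_lt_indicator_inv_le _
    _ ≤ subsetSup p w Q :=
        le_subsetSup hF (setOf_lt_indicator_inv_subset _) (pos_iff_ne_zero.2 hwF0)

lemma dualWkNorm_indicator_inv_le_subsetSup (hw : Measurable w) (hQ : MeasurableSet Q)
    (hQw : wInt w Q ≠ ∞) (hp : 1 ≤ p) :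
    dualWkNorm p (Q.indicator fun x => (w x)⁻¹) w ≤ subsetSup p w Q := by
  rcases hp.eq_or_lt with rfl | hp
  · rw [dualWkNorm, if_pos rfl]
    exact essSup_indicator_inv_le_subsetSup hw hQ hQw
  · rw [dualWkNorm, if_neg hp.ne']
    exact wkNormW_indicator_inv_le_subsetSup hw hQ hQw hp

lemma volume_eq_setLIntegral_indicator_inv (hw : Measurable w) (hw0 : ∀ x, w x ≠ 0)
    (hwt : ∀ x, w x ≠ ∞) (hQ : MeasurableSet Q) (hE : MeasurableSet E) (hEQ : E ⊆ Q) :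
    volume E = ∫⁻ x in E, Q.indicator (fun x => (w x)⁻¹) x ∂wMeasure w := by
  have hg : Measurable (Q.indicator fun x => (w x)⁻¹) := hw.inv.indicator hQ
  rw [wMeasure, setLIntegral_withDensity_eq_setLIntegral_mul _ hw hg hE,
    ← setLIntegral_one]
  refine setLIntegral_congr_fun hE fun x hx => ?_
  simp only [Pi.mul_apply, indicator_of_mem (hEQ hx), ENNReal.mul_inv_cancel (hw0 x) (hwt x)]

lemma volume_mul_wInt_rpow_le_dualWkNorm (hw : Measurable w) (hw0 : ∀ x, w x ≠ 0)
    (hwt : ∀ x, w x ≠ ∞) (hQ : MeasurableSet Q) (hE : MeasurableSet E) (hEQ : E ⊆ Q)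
    (hp : 1 ≤ p) :
    volume E * wInt w E ^ (-(1 / p)) ≤
      ENNReal.ofReal p * dualWkNorm p (Q.indicator fun x => (w x)⁻¹) w := by
  set g := Q.indicator fun x => (w x)⁻¹
  have hvol := volume_eq_setLIntegral_indicator_inv hw hw0 hwt hQ hE hEQ
  rcases hp.eq_or_lt with rfl | hp
  · have hle : volume E ≤ essSup g (wMeasure w) * wInt w E := by
      rw [hvol, ← wMeasure_apply w hE, ← setLIntegral_const]
      exact lintegral_mono_ae (ae_restrict_of_ae (ae_le_essSup g))
    rw [dualWkNorm, if_pos rfl, ENNReal.ofReal_one, one_mul, one_div_one, ENNReal.rpow_neg_one]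
    calc volume E * (wInt w E)⁻¹ ≤ essSup g (wMeasure w) * (wInt w E * (wInt w E)⁻¹) := by
          rw [← mul_assoc]; gcongr
      _ ≤ essSup g (wMeasure w) := mul_le_of_le_one_right zero_le (ENNReal.mul_inv_le_one _)
  · have hg : Measurable g := hw.inv.indicator hQ
    have hgt : ∀ᵐ x ∂wMeasure w, g x ≠ ∞ := ae_of_all _ fun x => by
      by_cases hx : x ∈ Q <;> simp [g, hx, hw0 x]
    have hp' : 1 < p / (p - 1) := by
      rw [one_lt_div (by linarith)]; linarith
    have hle := setLIntegral_le_wkNorm_mul_rpow hg.aemeasurable hgt hp' E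
    rw [← hvol, wMeasure_apply w hE,
      show p / (p - 1) / (p / (p - 1) - 1) = p by field_simp [show p - 1 ≠ 0 by linarith]; ring,
      show 1 - 1 / (p / (p - 1)) = 1 / p by field_simp [show p - 1 ≠ 0 by linarith]; ring] at hle
    rw [dualWkNorm, if_neg hp.ne', ENNReal.rpow_neg]
    calc volume E * (wInt w E ^ (1 / p))⁻¹
        ≤ ENNReal.ofReal p * wkNormW g (p / (p - 1)) w *
            (wInt w E ^ (1 / p) * (wInt w E ^ (1 / p))⁻¹) := by
          rw [← mul_assoc]; gcongr; exact hle
      _ ≤ ENNReal.ofReal p * wkNormW g (p / (p - 1)) w :=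
          mul_le_of_le_one_right zero_le (ENNReal.mul_inv_le_one _)

lemma subsetSup_le_ofReal_mul_dualWkNorm (hw : Measurable w) (hw0 : ∀ x, w x ≠ 0)
    (hwt : ∀ x, w x ≠ ∞) (hQ : MeasurableSet Q) (hp : 1 ≤ p) :
    subsetSup p w Q ≤ ENNReal.ofReal p * dualWkNorm p (Q.indicator fun x => (w x)⁻¹) w :=
  iSup₂_le fun _E hE => iSup₂_le fun hEQ _ =>
    volume_mul_wInt_rpow_le_dualWkNorm hw hw0 hwt hQ hE hEQ hp

end IndicatorInv

theorem stmt15_general {n : ℕ} (m : ℕ) (pp : Fin m → ℝ) (hpp : ∀ i, 1 ≤ pp i) (p : ℝ)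
    (w : Fin m → Rn n → ℝ≥0∞) (hw : ∀ i, IsWeight (w i)) (ν : Rn n → ℝ≥0∞) :
    AvecConst pp p w ν ≤ AvecNorm pp p w ν ∧
      AvecNorm pp p w ν ≤ ENNReal.ofReal (∏ i, pp i) * AvecConst pp p w ν := by
  simp only [AvecNorm, ← subsetSup_div]
  constructor
  · refine iSup₂_mono fun Q hQ => ?_
    gcongr with i
    exact dualWkNorm_indicator_inv_le_subsetSup (hw i).1 hQ.measurableSet ((hw i).2.2 Q hQ)
      (hpp i)
  · simp only [AvecConst, ENNReal.mul_iSup]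
    refine iSup₂_mono fun Q hQ => ?_
    calc wInt ν Q ^ (1 / p) * ∏ i, subsetSup (pp i) (w i) Q / volume Q
        ≤ wInt ν Q ^ (1 / p) * ∏ i, ENNReal.ofReal (pp i) *
            (dualWkNorm (pp i) (Q.indicator fun x => (w i x)⁻¹) (w i) / volume Q) := by
          gcongr with i
          rw [← mul_div_assoc]
          gcongr
          exact subsetSup_le_ofReal_mul_dualWkNorm (hw i).1 (fun x => ((hw i).2.1 x).1.ne')
            (fun x => ((hw i).2.1 x).2) hQ.measurableSet (hpp i)
      _ = _ := by
          rw [Finset.prod_mul_distrib, ← ENNReal.ofReal_prod_of_nonneg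
            fun i _ => zero_le_one.trans (hpp i), mul_left_comm]

/-- `[w⃗,ν] ≤ ‖w⃗,ν‖ ≤ p_1 ⋯ p_m [w⃗,ν]`. -/
theorem stmt15 {n : ℕ} (m : ℕ) (hm : 1 ≤ m) (pp : Fin m → ℝ) (hpp : ∀ i, 1 ≤ pp i)
    (p : ℝ) (hp : p⁻¹ = ∑ i, (pp i)⁻¹)
    (w : Fin m → Rn n → ℝ≥0∞) (hw : ∀ i, IsWeight (w i))
    (ν : Rn n → ℝ≥0∞) (hν : IsWeight ν) :
    AvecConst pp p w ν ≤ AvecNorm pp p w ν ∧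
      AvecNorm pp p w ν ≤ ENNReal.ofReal (∏ i, pp i) * AvecConst pp p w ν :=
  stmt15_general m pp hpp p w hw ν
end
end
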